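/- The genus g(G) = 1 − χ(G) is multiplicative under the Zykov join: for finite simple graphs G and H, 1 − χ(G + H) = (1 − χ(G)) · (1 − χ(H)), where χ(G) = Σ_{k≥0} (−1)^k f_k(G) is the Euler characteristic of the clique complex of G. -/

import Mathlib

open SimpleGraph

/-- The Zykov join of two graphs: disjoint union plus all cross edges. -/
def zykovJoin {α β : Type} (G : SimpleGraph α) (H : SimpleGraph β) :
    SimpleGraph (α ⊕ β) where
  Adj x y := (G.sum H).Adj x y ∨ x.isLeft ≠ y.isLeft
  symm := by
    constructor
    intro x y h
    rcases h with h | h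
    · exact Or.inl h.symm
    · exact Or.inr (Ne.symm h)
  loopless := by
    constructor
    intro x h
    rcases h with h | h
    · exact h.ne rfl
    · exact h rfl

/-- `fVec G k` is the number of `(k+1)`-cliques of `G`. -/
noncomputable def fVec {α : Type} (G : SimpleGraph α) (k : ℕ) : ℕ :=
  Nat.card {s : Finset α // G.IsNClique (k + 1) s}

/-- The Euler characteristic of the clique complex of `G`:
`χ(G) = f₀ - f₁ + f₂ - ⋯`. -/
noncomputable def eulerChar {α : Type} (G : SimpleGraph α) : ℤ :=
  ∑ k ∈ Finset.range (Nat.card α), (-1 : ℤ) ^ k * fVec G k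

/-!
Counting the empty clique with weight `+1` turns `1 - χ(G)` into `∑ (-1) ^ #s` over all cliques
`s` of `G`. The cliques of `G + H` are exactly the disjoint unions `s ⊔ t` of cliques of `G` and
`H`, and `(-1) ^ #(s ⊔ t) = (-1) ^ #s * (-1) ^ #t`, so this sum factors over the join.
-/

open Finset

section CliqueSum

variable {α : Type} [Fintype α] [DecidableEq α] (G : SimpleGraph α) [DecidableRel G.Adj]

lemma fVec_eq_card_cliqueFinset (k : ℕ) : fVec G k = #(G.cliqueFinset (k + 1)) := by
  simp [fVec, cliqueFinset, Fintype.card_subtype]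

lemma sum_cliques_apply_card {M : Type*} [AddCommMonoid M] (f : ℕ → M) :
    ∑ s ∈ univ.filter (fun s : Finset α ↦ G.IsClique s), f #s
      = ∑ n ∈ range (Fintype.card α + 1), #(G.cliqueFinset n) • f n := by
  have hcard : ∀ s ∈ univ.filter (fun s : Finset α ↦ G.IsClique s),
      #s ∈ range (Fintype.card α + 1) :=
    fun s _ ↦ mem_range_succ_iff.2 (card_le_univ s)
  rw [← sum_fiberwise_of_maps_to hcard]
  refine sum_congr rfl fun n _ ↦ ?_
  have hslice : (univ.filter (fun s : Finset α ↦ G.IsClique s)).filter (#· = n)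
      = G.cliqueFinset n := by
    ext s
    simp [isNClique_iff]
  rw [hslice, sum_congr rfl fun s hs ↦ by rw [(mem_cliqueFinset_iff.1 hs).card_eq], sum_const]

lemma one_sub_eulerChar_eq_sum_cliques :
    1 - eulerChar G = ∑ s ∈ univ.filter (fun s : Finset α ↦ G.IsClique s), (-1 : ℤ) ^ #s := by
  rw [sum_cliques_apply_card, sum_range_succ', eulerChar, Nat.card_eq_fintype_card]
  have hempty : #(G.cliqueFinset 0) = 1 := by simp [cliqueFinset, filter_eq']
  simp only [fVec_eq_card_cliqueFinset, hempty, nsmul_eq_mul', pow_succ, mul_neg_one, neg_mul,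
    sum_neg_distrib, pow_zero, Nat.cast_one]
  ring

end CliqueSum

section ZykovJoin

variable {α β : Type} {G : SimpleGraph α} {H : SimpleGraph β}

@[simp] lemma zykovJoin_adj_inl_inl {a a' : α} :
    (zykovJoin G H).Adj (.inl a) (.inl a') ↔ G.Adj a a' := by
  simp [zykovJoin]

@[simp] lemma zykovJoin_adj_inr_inr {b b' : β} :
    (zykovJoin G H).Adj (.inr b) (.inr b') ↔ H.Adj b b' := by
  simp [zykovJoin]

@[simp] lemma zykovJoin_adj_inl_inr (a : α) (b : β) : (zykovJoin G H).Adj (.inl a) (.inr b) := by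
  simp [zykovJoin]

@[simp] lemma zykovJoin_adj_inr_inl (a : α) (b : β) : (zykovJoin G H).Adj (.inr b) (.inl a) := by
  simp [zykovJoin]

lemma isClique_zykovJoin_disjSum_iff {s : Finset α} {t : Finset β} :
    (zykovJoin G H).IsClique (s.disjSum t : Set (α ⊕ β)) ↔
      G.IsClique (s : Set α) ∧ H.IsClique (t : Set β) := by
  constructor
  · intro h
    refine ⟨fun a ha a' ha' hne ↦ ?_, fun b hb b' hb' hne ↦ ?_⟩
    · simpa using h (x := .inl a) (y := .inl a') (by simpa using ha) (by simpa using ha') (by simpa)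
    · simpa using h (x := .inr b) (y := .inr b') (by simpa using hb) (by simpa using hb') (by simpa)
  · rintro ⟨hs, ht⟩ (a | b) hx (a' | b') hy hne <;> simp_all
    · exact hs hx hy hne
    · exact ht hx hy hne

lemma sum_pow_card_cliques_zykovJoin {R : Type*} [CommSemiring R] (x : R)
    [Fintype α] [Fintype β] [DecidableEq α] [DecidableEq β]
    [DecidableRel G.Adj] [DecidableRel H.Adj] [DecidableRel (zykovJoin G H).Adj] :
    ∑ u ∈ univ.filter (fun u : Finset (α ⊕ β) ↦ (zykovJoin G H).IsClique u), x ^ #u =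
      (∑ s ∈ univ.filter (fun s : Finset α ↦ G.IsClique s), x ^ #s) *
        ∑ t ∈ univ.filter (fun t : Finset β ↦ H.IsClique t), x ^ #t := by
  rw [sum_mul_sum, ← sum_product']
  symm
  refine sum_equiv sumEquiv.symm.toEquiv (fun p ↦ ?_) (fun p _ ↦ ?_)
  · simp [isClique_zykovJoin_disjSum_iff]
  · simp [pow_add]

end ZykovJoin

/-- The genus `1 - χ` is multiplicative under the Zykov join. -/
theorem genus_zykovJoin {α β : Type} [Fintype α] [Fintype β]
    (G : SimpleGraph α) (H : SimpleGraph β) :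
    1 - eulerChar (zykovJoin G H) = (1 - eulerChar G) * (1 - eulerChar H) := by
  classical
  simp only [one_sub_eulerChar_eq_sum_cliques]
  exact sum_pow_card_cliques_zykovJoin (-1)
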